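/- arXiv:2407.03832 — 3 statements merged into one kernel-verified Lean document; each statement's English description precedes it below -/
import Mathlib

section
/- Fix k ≥ 1. If the path graph P_n admits a burning sequence with exactly k sources, then n ≤ k² + 2k; moreover, the path graph P_{k²+2k} admits a burning sequence with exactly k sources. -/
/-!
A source placed at time `i` (counting from `0`) burns the vertices within distance `k - i` of
it, and on a path such a ball has at most `2(k - i) + 1` vertices. So `k` sources burn at most
`∑_{i<k} (2(k - i) + 1) = k² + 2k` vertices. Conversely, cut `P_{k²+2k}` into consecutive
blocks of lengths `2k + 1, 2k - 1, …, 3` and put the `i`-th source in the middle of the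
`i`-th block. A later source `j` lies beyond the end of block `i`, hence more than
`k - i ≥ j - i` away from source `i`, which is the separation condition.
-/

open SimpleGraph

/-- The path graph `P_n` with vertices `1, …, n` (represented by `Fin n`,
vertex `i+1` corresponds to index `i`) and edges `{i, i+1}`. -/
def pathG (n : ℕ) : SimpleGraph (Fin n) where
  Adj v w := v.val + 1 = w.val ∨ w.val + 1 = v.val
  symm := ⟨by intro v w h; tauto⟩
  loopless := ⟨by intro v h; rcases h with h | h <;> omega⟩

/-- `(s 0, …, s (k-1))` is a burning sequence of `G` (written `1`-based in the paper:
`d(v_i, v_j) ≥ j - i + 1` for `i < j`, and every vertex `v` satisfies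
`d(v_i, v) ≤ k + 1 - i` for some `i`). Distances are `ℕ∞`-valued. -/
def IsBurningSeq {V : Type*} (G : SimpleGraph V) {k : ℕ} (s : Fin k → V) : Prop :=
  1 ≤ k ∧
  (∀ i j : Fin k, i < j → ((j.val - i.val + 1 : ℕ) : ℕ∞) ≤ G.edist (s i) (s j)) ∧
  (∀ v : V, ∃ i : Fin k, G.edist (s i) v ≤ ((k - i.val : ℕ) : ℕ∞))

/-- The burning time function `λ(v) = min_{1 ≤ i ≤ k} (i + d(v_i, v))`. -/
noncomputable def burnTime {V : Type*} (G : SimpleGraph V) {k : ℕ} (s : Fin k → V)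
    (v : V) : ℕ :=
  (⨅ i : Fin k, ((i.val + 1 : ℕ) : ℕ∞) + G.edist (s i) v).toNat

/-- The end time `T = max_{v ∈ V} λ(v)` of a burning. -/
noncomputable def endTime {V : Type*} [Fintype V] (G : SimpleGraph V) {k : ℕ}
    (s : Fin k → V) : ℕ :=
  Finset.univ.sup fun v => burnTime G s v

open Finset

lemma pathG_dist_le_length {n : ℕ} {u v : Fin n} (p : (pathG n).Walk u v) :
    Nat.dist u v ≤ p.length := by
  induction p with
  | nil => simp
  | @cons a b c hab q ih =>
    have hab : a.val + 1 = b.val ∨ b.val + 1 = a.val := hab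
    simp only [Walk.length_cons, Nat.dist] at ih ⊢
    omega

lemma pathG_edist_le_of_add_eq {n : ℕ} (d : ℕ) {u v : Fin n} (h : u.val + d = v.val) :
    (pathG n).edist u v ≤ d := by
  induction d generalizing u with
  | zero => simp [Fin.ext (by simpa using h)]
  | succ d ih =>
    let w : Fin n := ⟨u + 1, by omega⟩
    have huw : (pathG n).edist u w = 1 := edist_eq_one_iff_adj.mpr (Or.inl rfl)
    calc (pathG n).edist u v ≤ (pathG n).edist u w + (pathG n).edist w v :=
          SimpleGraph.edist_triangle
      _ ≤ 1 + d := by rw [huw]; gcongr; exact ih (by simp only [w]; omega)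
      _ = (d + 1 : ℕ) := by push_cast; ring

theorem pathG_edist {n : ℕ} (u v : Fin n) : (pathG n).edist u v = Nat.dist u v := by
  refine le_antisymm ?_ ?_
  · rcases le_total u.val v.val with h | h
    · exact pathG_edist_le_of_add_eq _ (by rw [Nat.dist_eq_sub_of_le h]; omega)
    · rw [edist_comm, Nat.dist_comm]
      exact pathG_edist_le_of_add_eq _ (by rw [Nat.dist_eq_sub_of_le h]; omega)
  · rw [edist_eq_sInf]
    exact le_sInf fun _ ⟨p, hp⟩ => hp ▸ Nat.cast_le.mpr (pathG_dist_le_length p)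

lemma pathG_card_ball_le {n : ℕ} (u : Fin n) (r : ℕ) :
    #{v | (pathG n).edist u v ≤ r} ≤ 2 * r + 1 := by
  calc #{v | (pathG n).edist u v ≤ r} ≤ #(Icc (u - r : ℕ) (u + r)) := by
        refine card_le_card_of_injOn Fin.val (fun v hv => ?_) Fin.val_injective.injOn
        simp only [mem_coe, mem_filter, mem_univ, true_and, pathG_edist,
          Nat.cast_le, Nat.dist] at hv
        simp only [coe_Icc, Set.mem_Icc]
        omega
    _ ≤ 2 * r + 1 := by rw [Nat.card_Icc]; omega

lemma IsBurningSeq.card_le_sum_card_ball {V : Type*} [Fintype V] [DecidableEq V]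
    {G : SimpleGraph V} {k : ℕ} {s : Fin k → V} (hs : IsBurningSeq G s) :
    Fintype.card V ≤ ∑ i : Fin k, #{v | G.edist (s i) v ≤ (k - i : ℕ)} := by
  calc Fintype.card V = #(univ : Finset V) := rfl
    _ ≤ #(univ.biUnion fun i : Fin k => {v | G.edist (s i) v ≤ (k - i : ℕ)}) := by
        refine card_le_card fun v _ => ?_
        obtain ⟨i, hi⟩ := hs.2.2 v
        exact mem_biUnion.mpr ⟨i, mem_univ _, mem_filter.mpr ⟨mem_univ _, hi⟩⟩
    _ ≤ _ := card_biUnion_le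

lemma exists_le_lt_succ {α : Type*} [LinearOrder α] {f : ℕ → α} {a : α} {m : ℕ}
    (h0 : f 0 ≤ a) (hm : a < f m) : ∃ i < m, f i ≤ a ∧ a < f (i + 1) := by
  induction m with
  | zero => exact absurd hm (not_lt.mpr h0)
  | succ m ih =>
    by_cases ha : a < f m
    · obtain ⟨i, hi, h⟩ := ih ha
      exact ⟨i, by omega, h⟩
    · exact ⟨m, by omega, not_lt.mp ha, hm⟩

def blockStart (k i : ℕ) : ℕ := ∑ j ∈ range i, (2 * (k - j) + 1)

lemma blockStart_succ (k i : ℕ) : blockStart k (i + 1) = blockStart k i + (2 * (k - i) + 1) :=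
  sum_range_succ _ _

lemma blockStart_mono (k : ℕ) : Monotone (blockStart k) :=
  fun _ _ hij => sum_le_sum_of_subset (range_subset_range.mpr hij)

lemma blockStart_add_sq {k i : ℕ} (hi : i ≤ k) : blockStart k i + i ^ 2 = 2 * (k + 1) * i := by
  induction i with
  | zero => simp [blockStart]
  | succ i ih =>
    rw [blockStart_succ]
    have := ih (by omega)
    ring_nf at this ⊢
    omega

lemma blockStart_self (k : ℕ) : blockStart k k = k ^ 2 + 2 * k := by
  have := blockStart_add_sq le_rfl (k := k)
  ring_nf at this ⊢
  omega

theorem IsBurningSeq.le_of_pathG {n k : ℕ} {s : Fin k → Fin n}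
    (hs : IsBurningSeq (pathG n) s) : n ≤ k ^ 2 + 2 * k :=
  calc n = Fintype.card (Fin n) := (Fintype.card_fin n).symm
    _ ≤ ∑ i : Fin k, #{v | (pathG n).edist (s i) v ≤ (k - i : ℕ)} := hs.card_le_sum_card_ball
    _ ≤ ∑ i : Fin k, (2 * (k - i) + 1) := sum_le_sum fun _ _ => pathG_card_ball_le _ _
    _ = blockStart k k := Fin.sum_univ_eq_sum_range (fun i => 2 * (k - i) + 1) k
    _ = k ^ 2 + 2 * k := blockStart_self k

lemma blockStart_add_lt {k i : ℕ} (hi : i < k) : blockStart k i + (k - i) < k ^ 2 + 2 * k := by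
  have := blockStart_mono k (Nat.succ_le_of_lt hi)
  rw [blockStart_succ, blockStart_self] at this
  omega

def pathBurnSeq (k : ℕ) : Fin k → Fin (k ^ 2 + 2 * k) :=
  fun i => ⟨blockStart k i + (k - i), blockStart_add_lt i.isLt⟩

theorem isBurningSeq_pathBurnSeq {k : ℕ} (hk : 1 ≤ k) :
    IsBurningSeq (pathG (k ^ 2 + 2 * k)) (pathBurnSeq k) := by
  refine ⟨hk, fun i j hij => ?_, fun v => ?_⟩
  · have hij : i.val < j.val := hij
    have := blockStart_mono k (Nat.succ_le_of_lt hij)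
    rw [blockStart_succ] at this
    rw [pathG_edist, Nat.cast_le, Nat.dist]
    simp only [pathBurnSeq]
    omega
  · obtain ⟨i, hi, hiv, hvi⟩ := exists_le_lt_succ (f := blockStart k) (Nat.zero_le v)
      (by rw [blockStart_self]; exact v.isLt)
    rw [blockStart_succ] at hvi
    refine ⟨⟨i, hi⟩, ?_⟩
    rw [pathG_edist, Nat.cast_le, Nat.dist]
    simp only [pathBurnSeq]
    omega

/-- Fix `k ≥ 1`. If the path graph `P_n` admits a burning sequence
with exactly `k` sources then `n ≤ k² + 2k`; moreover `P_{k² + 2k}` admits a burning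
sequence with exactly `k` sources. -/
theorem stmt_9 (k : ℕ) (hk : 1 ≤ k) :
    (∀ n : ℕ, (∃ s : Fin k → Fin n, IsBurningSeq (pathG n) s) → n ≤ k ^ 2 + 2 * k) ∧
    (∃ s : Fin k → Fin (k ^ 2 + 2 * k), IsBurningSeq (pathG (k ^ 2 + 2 * k)) s) :=
  ⟨fun _ ⟨_, hs⟩ => hs.le_of_pathG, ⟨pathBurnSeq k, isBurningSeq_pathBurnSeq hk⟩⟩
end

section
/- Let G and H be finite simple graphs, let (v_1, …, v_k) be a burning sequence of G with time function λ_G and end time T_G, and let (w_1, …, w_m) be a burning sequence of H with time function λ_H and end time T_H, where k ≤ m. Let f : G → H be a graph map with f(v_i) = w_i for 1 ≤ i ≤ k, and let τ : {1, …, T_G} → {1, …, T_H} be a graph map of path graphs such that τ(λ_G(v)) = λ_H(f(v)) for every vertex v of G. If T_G = k, then τ(i) = i for every i with 1 ≤ i ≤ T_G, i.e. τ is an inclusion. -/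
open SimpleGraph

/-!
The separation condition of a burning sequence says that the source `v_i` is not reached by
the fire of any earlier source before it is lit itself, so `λ(v_i) = i`. Hence
`τ(i) = τ(λ_G(v_i)) = λ_H(f(v_i)) = λ_H(w_i) = i` for `i ≤ k = T_G`.
-/

lemma burnTime_apply_self {V : Type*} (G : SimpleGraph V) {k : ℕ} (s : Fin k → V)
    (hs : IsBurningSeq G s) (i : Fin k) : burnTime G s (s i) = i.val + 1 := by
  suffices h : ⨅ j : Fin k, ((j.val + 1 : ℕ) : ℕ∞) + G.edist (s j) (s i)
      = ((i.val + 1 : ℕ) : ℕ∞) by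
    rw [burnTime, h, ENat.toNat_natCast]
  refine le_antisymm ((iInf_le _ i).trans (by simp)) (le_iInf fun j => ?_)
  rcases lt_or_ge j.val i.val with hji | hij
  · calc ((i.val + 1 : ℕ) : ℕ∞) ≤ ((j.val + 1 : ℕ) : ℕ∞) + ((i.val - j.val + 1 : ℕ) : ℕ∞) := by
          rw [← Nat.cast_add, Nat.cast_le]; omega
      _ ≤ _ := add_le_add le_rfl (hs.2.1 j i hji)
  · calc ((i.val + 1 : ℕ) : ℕ∞) ≤ ((j.val + 1 : ℕ) : ℕ∞) := by
          rw [Nat.cast_le]; omega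
      _ ≤ _ := le_self_add

theorem stmt_14_general {V W : Type*} [Fintype V]
    (G : SimpleGraph V) (H : SimpleGraph W)
    {k m : ℕ} (s : Fin k → V) (t : Fin m → W)
    (hs : IsBurningSeq G s) (ht : IsBurningSeq H t) (hkm : k ≤ m)
    (f : V → W)
    (hfs : ∀ i : Fin k, f (s i) = t (Fin.castLE hkm i))
    (τ : ℕ → ℕ)
    (hcomm : ∀ v : V, τ (burnTime G s v) = burnTime H t (f v))
    (hTk : endTime G s = k) :
    ∀ i : ℕ, 1 ≤ i → i ≤ endTime G s → τ i = i := by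
  intro i hi hiT
  rw [hTk] at hiT
  let j : Fin k := ⟨i - 1, by omega⟩
  have hj : j.val + 1 = i := Nat.sub_add_cancel hi
  calc τ i = τ (burnTime G s (s j)) := by rw [burnTime_apply_self G s hs, hj]
    _ = burnTime H t (t (Fin.castLE hkm j)) := by rw [hcomm, hfs]
    _ = i := by rw [burnTime_apply_self H t ht, Fin.val_castLE, hj]

/-- Let `f : G → H` be a graph map carrying a burning sequence
`(v_1, …, v_k)` of `G` (with time function `λ_G` and end time `T_G`) into a burning
sequence `(w_1, …, w_m)` of `H` (with time function `λ_H` and end time `T_H`), i.e.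
`k ≤ m` and `f(v_i) = w_i` for `1 ≤ i ≤ k`, and let `τ : {1, …, T_G} → {1, …, T_H}`
be a graph map of path graphs with `τ ∘ λ_G = λ_H ∘ f`. If `T_G = k` then
`τ(i) = i` for all `1 ≤ i ≤ T_G`, i.e. `τ` is an inclusion. -/
theorem stmt_14 {V W : Type*} [Fintype V] [Fintype W]
    (G : SimpleGraph V) (H : SimpleGraph W)
    {k m : ℕ} (s : Fin k → V) (t : Fin m → W)
    (hs : IsBurningSeq G s) (ht : IsBurningSeq H t) (hkm : k ≤ m)
    (f : V → W)
    (hf : ∀ v w : V, G.Adj v w → f v = f w ∨ H.Adj (f v) (f w))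
    (hfs : ∀ i : Fin k, f (s i) = t (Fin.castLE hkm i))
    (τ : ℕ → ℕ)
    (hτ1 : ∀ i : ℕ, 1 ≤ i → i ≤ endTime G s → 1 ≤ τ i ∧ τ i ≤ endTime H t)
    (hτ2 : ∀ i : ℕ, 1 ≤ i → i + 1 ≤ endTime G s →
      τ (i + 1) = τ i ∨ τ (i + 1) = τ i + 1 ∨ τ i = τ (i + 1) + 1)
    (hcomm : ∀ v : V, τ (burnTime G s v) = burnTime H t (f v))
    (hTk : endTime G s = k) :
    ∀ i : ℕ, 1 ≤ i → i ≤ endTime G s → τ i = i :=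
  stmt_14_general G H s t hs ht hkm f hfs τ hcomm hTk
end

section
/- Let G be a finite tree (a connected acyclic finite simple graph) and let H be a connected subgraph of G (hence also a tree). Then G is a burning extension of H: for every burning sequence of H (with distances computed in H) there exists a burning sequence of G whose set of sources contains the set of sources of the given burning sequence of H. -/
/-!
In a tree the unique path between two vertices of a connected subgraph `H` runs inside `H`, so
distances in `H` equal those in `G`, and the separation condition (a) of a burning sequence of `H`
still holds in `G`. A separated sequence that misses a vertex `v` in condition (b) stays separated
when `v` is appended as a new last source, precisely because `v` is missed. Sources of a separated
sequence are distinct, so appending must stop, and it stops at a burning sequence of `G`.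
-/

open SimpleGraph

namespace SimpleGraph

theorem Subgraph.Connected.coe_edist_le_of_isTree {V : Type*} {G : SimpleGraph V}
    (hG : G.IsTree) {H : G.Subgraph} (hH : H.Connected) (u v : H.verts) :
    H.coe.edist u v ≤ G.edist u v := by
  classical
  obtain ⟨w⟩ := hH.preconnected u v
  obtain ⟨q, hq, hq_len⟩ := hG.connected.exists_path_of_dist (u : V) v
  have hmap : w.bypass.map H.hom = q :=
    (hG.existsUnique_path u v).unique (w.bypass_isPath.map Subgraph.hom_injective) hq
  calc H.coe.edist u v ≤ w.bypass.length := edist_le _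
    _ = q.length := by rw [← hmap]; exact_mod_cast (Walk.length_map _ _).symm
    _ = G.edist u v := by rw [hq_len, (hG.connected.preconnected u v).coe_dist_eq_edist]

section Burning

variable {V : Type*} (G : SimpleGraph V)

def IsBurningSeparated {k : ℕ} (s : Fin k → V) : Prop :=
  ∀ i j : Fin k, i < j → ((j.val - i.val + 1 : ℕ) : ℕ∞) ≤ G.edist (s i) (s j)

def IsBurnedBy {k : ℕ} (s : Fin k → V) (v : V) : Prop :=
  ∃ i : Fin k, G.edist (s i) v ≤ ((k - i.val : ℕ) : ℕ∞)

variable {G}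

theorem IsBurningSeparated.injective {k : ℕ} {s : Fin k → V} (hs : G.IsBurningSeparated s) :
    Function.Injective s := by
  intro i j hij
  by_contra hne
  rcases lt_or_gt_of_ne hne with h | h
  · simpa [hij] using hs i j h
  · simpa [hij] using hs j i h

theorem IsBurningSeparated.snoc {k : ℕ} {s : Fin k → V} (hs : G.IsBurningSeparated s) {v : V}
    (hv : ¬ G.IsBurnedBy s v) : G.IsBurningSeparated (Fin.snoc s v : Fin (k + 1) → V) := by
  intro i j hij
  induction j using Fin.lastCases with
  | last =>
    obtain ⟨i, rfl⟩ := Fin.exists_castSucc_eq.mpr (Fin.ne_last_of_lt hij)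
    simp only [IsBurnedBy, not_exists, not_le] at hv
    simpa [Nat.sub_add_comm i.isLt.le] using Order.add_one_le_of_lt (hv i)
  | cast j =>
    obtain ⟨i, rfl⟩ := Fin.exists_castSucc_eq.mpr (Fin.ne_last_of_lt hij)
    simpa using hs i j (Fin.castSucc_lt_castSucc_iff.mp hij)

theorem exists_isBurningSeq_of_isBurningSeparated [Finite V] {k : ℕ} {s : Fin k → V}
    (hk : 1 ≤ k) (hs : G.IsBurningSeparated s) :
    ∃ (k' : ℕ) (s' : Fin k' → V), IsBurningSeq G s' ∧
      ∀ i : Fin k, ∃ j : Fin k', s' j = s i := by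
  by_cases hcov : ∀ v, G.IsBurnedBy s v
  · exact ⟨k, s, ⟨hk, hs, hcov⟩, fun i => ⟨i, rfl⟩⟩
  obtain ⟨v, hv⟩ := not_forall.mp hcov
  have hs' := hs.snoc hv
  have hcard : k + 1 ≤ Nat.card V := by
    simpa using Nat.card_le_card_of_injective _ hs'.injective
  obtain ⟨k', s', hburn, hsub⟩ := exists_isBurningSeq_of_isBurningSeparated (by omega) hs'
  refine ⟨k', s', hburn, fun i => ?_⟩
  obtain ⟨j, hj⟩ := hsub i.castSucc
  exact ⟨j, hj.trans (Fin.snoc_castSucc ..)⟩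
termination_by Nat.card V - k

end Burning

end SimpleGraph

/-- Let `G` be a finite tree and `H` a connected subgraph of `G`
(hence a tree). Then `G` is a burning extension of `H`: for every burning sequence
of `H` (distances computed within `H`) there is a burning sequence of `G` whose set
of sources contains the set of sources of the given sequence. -/
theorem stmt_18 {V : Type*} [Fintype V] (G : SimpleGraph V) (hG : G.IsTree)
    (H : G.Subgraph) (hH : H.Connected)
    {m : ℕ} (t : Fin m → H.verts) (ht : IsBurningSeq H.coe t) :
    ∃ (k : ℕ) (s : Fin k → V), IsBurningSeq G s ∧
      ∀ i : Fin m, ∃ j : Fin k, s j = (t i : V) := by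
  obtain ⟨hm, hsep, -⟩ := ht
  exact exists_isBurningSeq_of_isBurningSeparated hm fun i j hij =>
    (hsep i j hij).trans (hH.coe_edist_le_of_isTree hG (t i) (t j))
end
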